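/- The species of labelled rooted trees with NAP partial compositions forms a symmetric operad: the partial compositions ∘_s satisfy parallel associativity, nested associativity, naturality with respect to bijective relabellings, and unitality with respect to single-vertex trees. -/

import Mathlib

/-- A labelled rooted tree with vertex set `supp` inside an ambient label type `V`,
given by its root and its parent function (normalized to the identity outside
`supp`, and fixing the root). -/
structure LTree (V : Type) where
  supp : Finset V
  root : V
  parent : V → V

namespace LTree

variable {V : Type} [DecidableEq V]

/-- `t` is an honest rooted tree on its vertex set `t.supp`:  the root is a vertex,
the parent map fixes the root, sends vertices to vertices, every vertex reaches the
root by iterating the parent map (connectedness/acyclicity), and the parent map is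
normalized to the identity outside the vertex set. -/
def IsTree (t : LTree V) : Prop :=
  t.root ∈ t.supp ∧ t.parent t.root = t.root ∧
    (∀ v ∈ t.supp, t.parent v ∈ t.supp ∧ ∃ n, t.parent^[n] v = t.root) ∧
    (∀ v, v ∉ t.supp → t.parent v = v)

/-- The NAP partial composition `u ∘ₛ v`: replace the vertex `s` of `u` by the tree
`v`, reconnecting each edge of `u` arriving at `s` to the root of `v`. -/
def ncomp (u : LTree V) (s : V) (v : LTree V) : LTree V where
  supp := u.supp.erase s ∪ v.supp
  root := if u.root = s then v.root else u.root
  parent x :=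
    if x ∈ u.supp.erase s then (if u.parent x = s then v.root else u.parent x)
    else if x ∈ v.supp then
      (if x = v.root then (if u.parent s = s then v.root else u.parent s) else v.parent x)
    else x

/-- Relabelling a tree along a bijection of the ambient label type. -/
def relabel (e : V ≃ V) (t : LTree V) : LTree V where
  supp := t.supp.image e
  root := e t.root
  parent x := e (t.parent (e.symm x))

/-- The single-vertex tree on the vertex `a`. -/
def eta (a : V) : LTree V := ⟨{a}, a, fun x => x⟩

/-- The edges of `u` arriving at `s`, identified with the children of `s`. -/
def children (u : LTree V) (s : V) : Finset V :=
  (u.supp.erase s).filter (fun w => u.parent w = s)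

/-- The tree `u ∘ₛᶠ v` for `f : In(s,u) → Ver(v)`: replace the vertex `s` of `u` by
the tree `v`, reconnecting each edge `a ∈ In(s,u)` to the vertex `f a` of `v`. -/
def fcomp (u : LTree V) (s : V) (v : LTree V) (f : V → V) : LTree V where
  supp := u.supp.erase s ∪ v.supp
  root := if u.root = s then v.root else u.root
  parent x :=
    if x ∈ u.supp.erase s then (if u.parent x = s then f x else u.parent x)
    else if x ∈ v.supp then
      (if x = v.root then (if u.parent s = s then v.root else u.parent s) else v.parent x)
    else x

/-- The Pre-Lie partial composition `u ∘ₛ v := Σ_{f : In(s,u) → Ver(v)} u ∘ₛᶠ v`,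
a formal linear combination of rooted trees. -/
noncomputable def plcomp (u : LTree V) (s : V) (v : LTree V) : LTree V →₀ ℚ :=
  ∑ f : {w // w ∈ children u s} → {x // x ∈ v.supp},
    Finsupp.single
      (fcomp u s v (fun w => if h : w ∈ children u s then (f ⟨w, h⟩ : V) else v.root)) 1

/-- Bilinear extension of the Pre-Lie partial composition to formal sums. -/
noncomputable def plext (x : LTree V →₀ ℚ) (s : V) (y : LTree V →₀ ℚ) : LTree V →₀ ℚ :=
  x.sum fun t a => y.sum fun u b => (a * b) • plcomp t s u

end LTree

/-! On the vertices of `u`, `ncomp u s v` changes parents only through the redirection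
`redirect s v.root : a ↦ if a = s then v.root else a`; the root of `v` takes the redirected
parent of `s`, and the other vertices of `v` keep theirs. Parallel associativity thus reduces to
the commutation of the redirections at distinct vertices `s ≠ s'`, and nested associativity to
`redirect t c ∘ redirect s b = redirect s (redirect t c b)` away from `t`, since the root of
`ncomp y t z` is `redirect t z.root y.root`. -/
namespace LTree

variable {V : Type}

@[ext]
theorem ext {t u : LTree V} (hsupp : t.supp = u.supp) (hroot : t.root = u.root)
    (hparent : t.parent = u.parent) : t = u := by
  cases t; cases u; simp_all

section IsTree

variable {x : LTree V}

theorem IsTree.root_mem (hx : x.IsTree) : x.root ∈ x.supp := hx.1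

theorem IsTree.parent_root (hx : x.IsTree) : x.parent x.root = x.root := hx.2.1

theorem IsTree.parent_mem (hx : x.IsTree) {w : V} (hw : w ∈ x.supp) : x.parent w ∈ x.supp :=
  (hx.2.2.1 w hw).1

theorem IsTree.parent_of_not_mem (hx : x.IsTree) {w : V} (hw : w ∉ x.supp) : x.parent w = w :=
  hx.2.2.2 w hw

end IsTree

variable [DecidableEq V]

def redirect (s b a : V) : V := if a = s then b else a

theorem redirect_self (s b : V) : redirect s b s = b := if_pos rfl

theorem redirect_of_ne {s b a : V} (h : a ≠ s) : redirect s b a = a := if_neg h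

theorem redirect_comm {s s' b c : V} (hss' : s ≠ s') (hb : b ≠ s') (hc : c ≠ s) (a : V) :
    redirect s' c (redirect s b a) = redirect s b (redirect s' c a) := by
  unfold redirect; split_ifs <;> simp_all

theorem redirect_same (s a : V) : redirect s s a = a := by
  unfold redirect; split_ifs <;> simp_all

theorem ne_redirect {s b a w : V} (hb : w ≠ b) (ha : w ≠ a) : w ≠ redirect s b a := by
  unfold redirect; split_ifs <;> assumption

theorem redirect_redirect {s t b c a : V} (ha : a ≠ t) :
    redirect t c (redirect s b a) = redirect s (redirect t c b) a := by
  unfold redirect; split_ifs <;> simp_all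

theorem redirect_apply_of_injective {f : V → V} (hf : f.Injective) (s b a : V) :
    f (redirect s b a) = redirect (f s) (f b) (f a) := by
  unfold redirect; split_ifs <;> simp_all [hf.eq_iff]

section ncomp

variable {u v : LTree V} {s w : V}

theorem mem_supp_ncomp : w ∈ (ncomp u s v).supp ↔ w ∈ u.supp ∧ w ≠ s ∨ w ∈ v.supp := by
  simp [ncomp, and_comm]

theorem root_ncomp : (ncomp u s v).root = redirect s v.root u.root := rfl

theorem parent_ncomp_of_mem_left (hw : w ∈ u.supp) (hws : w ≠ s) :
    (ncomp u s v).parent w = redirect s v.root (u.parent w) := by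
  simp [ncomp, hw, hws, redirect]

theorem parent_ncomp_of_mem_right (hd : Disjoint u.supp v.supp) (hw : w ∈ v.supp) :
    (ncomp u s v).parent w =
      if w = v.root then redirect s v.root (u.parent s) else v.parent w := by
  have : w ∉ u.supp := Finset.disjoint_right.mp hd hw
  simp [ncomp, hw, this, redirect]

theorem parent_ncomp_of_not_mem (hw : w ∉ (ncomp u s v).supp) : (ncomp u s v).parent w = w := by
  rw [mem_supp_ncomp, not_or] at hw
  simp only [ncomp, Finset.mem_erase]
  rw [if_neg (by tauto), if_neg hw.2]

theorem disjoint_supp_ncomp_left {z : LTree V} (hu : Disjoint u.supp z.supp)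
    (hv : Disjoint v.supp z.supp) : Disjoint (ncomp u s v).supp z.supp :=
  Finset.disjoint_union_left.mpr ⟨Finset.disjoint_of_subset_left (Finset.erase_subset _ _) hu, hv⟩

theorem disjoint_supp_ncomp_right {x : LTree V} (hu : Disjoint x.supp u.supp)
    (hv : Disjoint x.supp v.supp) : Disjoint x.supp (ncomp u s v).supp :=
  (disjoint_supp_ncomp_left hu.symm hv.symm).symm

end ncomp

section Operad

variable {x y z : LTree V} {s s' t : V}

theorem supp_ncomp_ncomp_comm (hs'y : s' ∉ y.supp) (hsz : s ∉ z.supp) :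
    (ncomp (ncomp x s y) s' z).supp = (ncomp (ncomp x s' z) s y).supp := by
  ext w
  simp only [mem_supp_ncomp]
  grind

theorem parent_ncomp_ncomp_comm (hy : y.IsTree) (hz : z.IsTree) (dxy : Disjoint x.supp y.supp)
    (dxz : Disjoint x.supp z.supp) (dyz : Disjoint y.supp z.supp) (hs : s ∈ x.supp)
    (hs' : s' ∈ x.supp) (hss' : s ≠ s') :
    (ncomp (ncomp x s y) s' z).parent = (ncomp (ncomp x s' z) s y).parent := by
  have hs'y : s' ∉ y.supp := Finset.disjoint_left.mp dxy hs'
  have hsz : s ∉ z.supp := Finset.disjoint_left.mp dxz hs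
  have hyr : y.root ≠ s' := ne_of_mem_of_not_mem hy.root_mem hs'y
  have hzr : z.root ≠ s := ne_of_mem_of_not_mem hz.root_mem hsz
  funext w
  by_cases hw : w ∉ (ncomp (ncomp x s y) s' z).supp
  · rw [parent_ncomp_of_not_mem hw,
      parent_ncomp_of_not_mem (supp_ncomp_ncomp_comm hs'y hsz ▸ hw)]
  simp only [not_not, mem_supp_ncomp] at hw
  rcases hw with ⟨⟨hwx, hws⟩ | hwy, hws'⟩ | hwz
  · rw [parent_ncomp_of_mem_left (mem_supp_ncomp.2 (.inl ⟨hwx, hws⟩)) hws',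
      parent_ncomp_of_mem_left (mem_supp_ncomp.2 (.inl ⟨hwx, hws'⟩)) hws,
      parent_ncomp_of_mem_left hwx hws, parent_ncomp_of_mem_left hwx hws']
    exact redirect_comm hss' hyr hzr _
  · rw [parent_ncomp_of_mem_left (mem_supp_ncomp.2 (.inr hwy)) hws',
      parent_ncomp_of_mem_right dxy hwy,
      parent_ncomp_of_mem_right (disjoint_supp_ncomp_left dxy dyz.symm) hwy,
      parent_ncomp_of_mem_left hs hss']
    split_ifs
    · exact redirect_comm hss' hyr hzr _
    · exact redirect_of_ne (ne_of_mem_of_not_mem (hy.parent_mem hwy) hs'y)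
  · rw [parent_ncomp_of_mem_left (mem_supp_ncomp.2 (.inr hwz)) (ne_of_mem_of_not_mem hwz hsz),
      parent_ncomp_of_mem_right dxz hwz,
      parent_ncomp_of_mem_right (disjoint_supp_ncomp_left dxz dyz) hwz,
      parent_ncomp_of_mem_left hs' hss'.symm]
    split_ifs
    · exact redirect_comm hss' hyr hzr _
    · exact (redirect_of_ne (ne_of_mem_of_not_mem (hz.parent_mem hwz) hsz)).symm

theorem ncomp_ncomp_comm (hy : y.IsTree) (hz : z.IsTree) (dxy : Disjoint x.supp y.supp)
    (dxz : Disjoint x.supp z.supp) (dyz : Disjoint y.supp z.supp) (hs : s ∈ x.supp)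
    (hs' : s' ∈ x.supp) (hss' : s ≠ s') :
    ncomp (ncomp x s y) s' z = ncomp (ncomp x s' z) s y := by
  have hs'y : s' ∉ y.supp := Finset.disjoint_left.mp dxy hs'
  have hsz : s ∉ z.supp := Finset.disjoint_left.mp dxz hs
  ext1
  · exact supp_ncomp_ncomp_comm hs'y hsz
  · exact redirect_comm hss' (ne_of_mem_of_not_mem hy.root_mem hs'y)
      (ne_of_mem_of_not_mem hz.root_mem hsz) x.root
  · exact parent_ncomp_ncomp_comm hy hz dxy dxz dyz hs hs' hss'

theorem supp_ncomp_ncomp_assoc (htx : t ∉ x.supp) :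
    (ncomp (ncomp x s y) t z).supp = (ncomp x s (ncomp y t z)).supp := by
  ext w
  simp only [mem_supp_ncomp]
  grind

theorem parent_ncomp_ncomp_assoc (hx : x.IsTree) (hy : y.IsTree) (hz : z.IsTree)
    (dxy : Disjoint x.supp y.supp) (dxz : Disjoint x.supp z.supp) (dyz : Disjoint y.supp z.supp)
    (hs : s ∈ x.supp) (ht : t ∈ y.supp) :
    (ncomp (ncomp x s y) t z).parent = (ncomp x s (ncomp y t z)).parent := by
  have htx : t ∉ x.supp := Finset.disjoint_right.mp dxy ht
  have hzy : z.root ∉ y.supp := Finset.disjoint_right.mp dyz hz.root_mem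
  have hyz : y.root ∉ z.supp := Finset.disjoint_left.mp dyz hy.root_mem
  have hpt : x.parent s ≠ t := ne_of_mem_of_not_mem (hx.parent_mem hs) htx
  have dx_yz : Disjoint x.supp (ncomp y t z).supp := disjoint_supp_ncomp_right dxy dxz
  funext w
  by_cases hw : w ∉ (ncomp (ncomp x s y) t z).supp
  · rw [parent_ncomp_of_not_mem hw,
      parent_ncomp_of_not_mem (supp_ncomp_ncomp_assoc htx ▸ hw)]
  simp only [not_not, mem_supp_ncomp] at hw
  rcases hw with ⟨⟨hwx, hws⟩ | hwy, hwt⟩ | hwz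
  · rw [parent_ncomp_of_mem_left (mem_supp_ncomp.2 (.inl ⟨hwx, hws⟩)) hwt,
      parent_ncomp_of_mem_left hwx hws, parent_ncomp_of_mem_left hwx hws]
    exact redirect_redirect (ne_of_mem_of_not_mem (hx.parent_mem hwx) htx)
  · rw [parent_ncomp_of_mem_left (mem_supp_ncomp.2 (.inr hwy)) hwt,
      parent_ncomp_of_mem_right dxy hwy,
      parent_ncomp_of_mem_right dx_yz (mem_supp_ncomp.2 (.inl ⟨hwy, hwt⟩)),
      parent_ncomp_of_mem_left hwy hwt, root_ncomp]
    by_cases hwr : w = y.root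
    · subst hwr
      rw [if_pos rfl, redirect_redirect hpt, redirect_of_ne hwt, if_pos rfl]
    · have hwz : w ≠ z.root := ne_of_mem_of_not_mem hwy hzy
      rw [if_neg hwr, if_neg (ne_redirect hwz hwr)]
  · rw [parent_ncomp_of_mem_right (disjoint_supp_ncomp_left dxz dyz) hwz,
      parent_ncomp_of_mem_right dx_yz (mem_supp_ncomp.2 (.inr hwz)),
      parent_ncomp_of_mem_right dyz hwz, parent_ncomp_of_mem_right dxy ht, root_ncomp]
    by_cases hwr : w = z.root
    · subst hwr
      by_cases hty : t = y.root
      · subst hty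
        rw [if_pos rfl, if_pos rfl, redirect_redirect hpt, redirect_self, if_pos rfl]
      · rw [if_pos rfl, if_neg hty, redirect_of_ne (Ne.symm hty),
          if_neg (ne_of_mem_of_not_mem hz.root_mem hyz), if_pos rfl]
    · have hwy : w ≠ y.root := ne_of_mem_of_not_mem hwz hyz
      rw [if_neg hwr, if_neg hwr, if_neg (ne_redirect hwr hwy)]

theorem ncomp_ncomp_assoc (hx : x.IsTree) (hy : y.IsTree) (hz : z.IsTree)
    (dxy : Disjoint x.supp y.supp) (dxz : Disjoint x.supp z.supp) (dyz : Disjoint y.supp z.supp)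
    (hs : s ∈ x.supp) (ht : t ∈ y.supp) :
    ncomp (ncomp x s y) t z = ncomp x s (ncomp y t z) := by
  have htx : t ∉ x.supp := Finset.disjoint_right.mp dxy ht
  ext1
  · exact supp_ncomp_ncomp_assoc htx
  · exact redirect_redirect (ne_of_mem_of_not_mem hx.root_mem htx)
  · exact parent_ncomp_ncomp_assoc hx hy hz dxy dxz dyz hs ht

theorem relabel_ncomp (e : V ≃ V) (x : LTree V) (s : V) (y : LTree V) :
    relabel e (ncomp x s y) = ncomp (relabel e x) (e s) (relabel e y) := by
  ext1
  · simp only [relabel, ncomp, Finset.image_union, Finset.image_erase e.injective]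
  · exact redirect_apply_of_injective e.injective s y.root x.root
  · funext w
    obtain ⟨a, rfl⟩ := e.surjective w
    simp only [relabel, ncomp, Equiv.symm_apply_apply, Finset.mem_erase, Finset.mem_image,
      EmbeddingLike.apply_eq_iff_eq, exists_eq_right]
    split_ifs <;> simp_all

theorem relabel_eta (a : V) (e : V ≃ V) : relabel e (eta a) = eta (e a) := by
  ext w <;> simp [relabel, eta]

theorem eta_ncomp (hy : y.IsTree) {a : V} (ha : a ∉ y.supp) : ncomp (eta a) a y = y := by
  ext w
  · simp [mem_supp_ncomp, eta]
  · exact redirect_self a y.root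
  · by_cases hw : w ∈ y.supp
    · rw [parent_ncomp_of_mem_right (Finset.disjoint_singleton_left.mpr ha) hw]
      split_ifs with hwr
      · rw [hwr, hy.parent_root]
        exact redirect_self a y.root
      · rfl
    · rw [parent_ncomp_of_not_mem (by simpa [mem_supp_ncomp, eta] using hw),
        hy.parent_of_not_mem hw]

theorem ncomp_eta (hx : x.IsTree) (hs : s ∈ x.supp) : ncomp x s (eta s) = x := by
  ext w
  · simp only [mem_supp_ncomp, eta, Finset.mem_singleton]
    grind
  · exact redirect_same s x.root
  · by_cases hw : w ∉ x.supp
    · have hws : w ≠ s := (ne_of_mem_of_not_mem hs hw).symm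
      rw [parent_ncomp_of_not_mem (by simp [mem_supp_ncomp, eta, hw, hws]),
        hx.parent_of_not_mem hw]
    by_cases hws : w = s
    · subst hws
      simp [ncomp, eta, eq_comm]
    · rw [parent_ncomp_of_mem_left (not_not.mp hw) hws]
      exact redirect_same s _

end Operad

end LTree

open LTree in
/-- The species of labelled rooted trees with NAP partial compositions is a symmetric
operad: parallel associativity (A1), nested associativity (A2), naturality under
bijective relabellings (N1) and (N2), and unitality (U1), (U2) with the one-vertex
trees as units. -/
theorem nap_is_operad {V : Type} [DecidableEq V] :
    -- (A1) parallel associativity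
    (∀ (x y z : LTree V), x.IsTree → y.IsTree → z.IsTree →
      Disjoint x.supp y.supp → Disjoint x.supp z.supp → Disjoint y.supp z.supp →
      ∀ s s' : V, s ∈ x.supp → s' ∈ x.supp → s ≠ s' →
        ncomp (ncomp x s y) s' z = ncomp (ncomp x s' z) s y) ∧
    -- (A2) nested associativity
    (∀ (x y z : LTree V), x.IsTree → y.IsTree → z.IsTree →
      Disjoint x.supp y.supp → Disjoint x.supp z.supp → Disjoint y.supp z.supp →
      ∀ s t : V, s ∈ x.supp → t ∈ y.supp →
        ncomp (ncomp x s y) t z = ncomp x s (ncomp y t z)) ∧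
    -- (N1) naturality of the partial compositions under relabelling
    (∀ (x y : LTree V), x.IsTree → y.IsTree → Disjoint x.supp y.supp →
      ∀ s : V, s ∈ x.supp → ∀ e : V ≃ V,
        relabel e (ncomp x s y) = ncomp (relabel e x) (e s) (relabel e y)) ∧
    -- (N2) naturality of the units
    (∀ (a : V) (e : V ≃ V), relabel e (eta a) = eta (e a)) ∧
    -- (U1) left unitality
    (∀ (a : V) (y : LTree V), y.IsTree → a ∉ y.supp → ncomp (eta a) a y = y) ∧
    -- (U2) right unitality
    (∀ (x : LTree V) (s : V), x.IsTree → s ∈ x.supp → ncomp x s (eta s) = x) := by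
  exact ⟨fun _ _ _ _ hy hz dxy dxz dyz _ _ hs hs' hss' =>
      ncomp_ncomp_comm hy hz dxy dxz dyz hs hs' hss',
    fun _ _ _ hx hy hz dxy dxz dyz _ _ hs ht => ncomp_ncomp_assoc hx hy hz dxy dxz dyz hs ht,
    fun x y _ _ _ s _ e => relabel_ncomp e x s y,
    relabel_eta,
    fun _ _ hy ha => eta_ncomp hy ha,
    fun _ _ hx hs => ncomp_eta hx hs⟩
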